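/- (Eckart–Young–Mirsky theorem in Frobenius norm, as invoked in the proof.) Let W ∈ ℝ^{m×n} admit a singular value decomposition W = Σ_{k=1}^{p} σ_k u_k v_kᵀ, where p = min(m, n), σ_1 ≥ σ_2 ≥ … ≥ σ_p ≥ 0, (u_k)_{k=1}^p is orthonormal in ℝ^m, and (v_k)_{k=1}^p is orthonormal in ℝ^n. For 1 ≤ r ≤ p, let W_r = Σ_{k=1}^{r} σ_k u_k v_kᵀ be the rank-r truncation. Then ‖W − W_r‖_F = sqrt(Σ_{k=r+1}^{p} σ_k²), and for every matrix B ∈ ℝ^{m×n} with rank(B) ≤ r one has ‖W − W_r‖_F ≤ ‖W − B‖_F. -/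

import Mathlib

/-!
Write `w_j` for the columns of `W`, so that `w_j = ∑ₖ σₖ v_k(j) u_k`; since the rows `v_k` are
orthonormal, `∑ⱼ ‖∑ₖ v_k(j) y_k‖² = ∑ₖ ‖y_k‖²` for any vectors `y_k`, which computes
`‖W - W_r‖_F² = ∑_{k ≥ r} σₖ²`. For `B` of rank at most `r`, let `P` be the orthogonal projection
onto its column space `K`. Column by column, `‖W - B‖_F² ≥ ‖W‖_F² - ∑ⱼ ‖P w_j‖²`, and
`∑ⱼ ‖P w_j‖² = ∑ₖ σₖ² cₖ` with `cₖ = ‖P u_k‖² ∈ [0, 1]` and `∑ₖ cₖ ≤ dim K ≤ r` (Bessel against an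
orthonormal basis of `K`). Since `σ` is decreasing, such a weighted sum is at most `∑_{k < r} σₖ²`.
-/

open Matrix Finset

/-- Frobenius inner product of real matrices: ⟨X, Y⟩_F = trace(Xᵀ Y). -/
noncomputable def frobInner {m n : ℕ} (X Y : Matrix (Fin m) (Fin n) ℝ) : ℝ :=
  (Xᵀ * Y).trace

/-- Frobenius norm: ‖X‖_F = sqrt(⟨X, X⟩_F). -/
noncomputable def frobNorm {m n : ℕ} (X : Matrix (Fin m) (Fin n) ℝ) : ℝ :=
  Real.sqrt (frobInner X X)

open scoped RealInnerProductSpace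

theorem sum_filter_lt_add_sum_filter_le {M : Type*} [AddCommMonoid M] {p : ℕ} (f : Fin p → M)
    (r : ℕ) :
    ∑ k ∈ univ.filter (fun k : Fin p => (k : ℕ) < r), f k +
      ∑ k ∈ univ.filter (fun k : Fin p => r ≤ (k : ℕ)), f k = ∑ k, f k := by
  rw [← Finset.sum_filter_add_sum_filter_not univ (fun k : Fin p => (k : ℕ) < r)]
  simp only [not_lt]

theorem frobInner_self_eq_sum_norm_sq {m n : ℕ} (X : Matrix (Fin m) (Fin n) ℝ) :
    frobInner X X = ∑ j, ‖WithLp.toLp 2 (Xᵀ j)‖ ^ 2 := by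
  simp_rw [EuclideanSpace.norm_sq_eq, Real.norm_eq_abs, sq_abs]
  simp [frobInner, Matrix.trace, Matrix.mul_apply, sq]

theorem orthonormal_toLp_of_sum_mul_eq_ite {ι : Type*} [DecidableEq ι] {m : ℕ}
    (u : ι → Fin m → ℝ) (hu : ∀ k l, ∑ i, u k i * u l i = if k = l then (1 : ℝ) else 0) :
    Orthonormal ℝ fun k => WithLp.toLp 2 (u k) := by
  rw [orthonormal_iff_ite]
  intro k l
  simpa [PiLp.inner_apply, mul_comm] using hu k l

theorem sum_norm_sq_sum_smul {ι J E : Type*} [Fintype J] [NormedAddCommGroup E]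
    [InnerProductSpace ℝ E] [DecidableEq ι] (s : Finset ι) (v : ι → J → ℝ)
    (hv : ∀ k l, ∑ j, v k j * v l j = if k = l then (1 : ℝ) else 0) (y : ι → E) :
    ∑ j, ‖∑ k ∈ s, v k j • y k‖ ^ 2 = ∑ k ∈ s, ‖y k‖ ^ 2 := by
  simp_rw [← real_inner_self_eq_norm_sq, sum_inner, inner_sum, real_inner_smul_left,
    real_inner_smul_right, ← mul_assoc]
  rw [Finset.sum_comm]
  refine Finset.sum_congr rfl fun k hk => ?_
  rw [Finset.sum_comm]
  simp_rw [← Finset.sum_mul, hv, ite_mul, one_mul, zero_mul, Finset.sum_ite_eq, if_pos hk]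

theorem toLp_transpose_sum_smul_vecMulVec {ι : Type*} {m n : ℕ} (s : Finset ι) (σ : ι → ℝ)
    (u : ι → Fin m → ℝ) (v : ι → Fin n → ℝ) (j : Fin n) :
    WithLp.toLp 2 ((∑ k ∈ s, σ k • vecMulVec (u k) (v k))ᵀ j) =
      ∑ k ∈ s, v k j • σ k • WithLp.toLp 2 (u k) := by
  ext i
  simp only [transpose_apply, Matrix.sum_apply, Matrix.smul_apply, vecMulVec_apply, smul_eq_mul,
    WithLp.ofLp_sum, WithLp.ofLp_smul, Finset.sum_apply, Pi.smul_apply]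
  exact Finset.sum_congr rfl fun k _ => by ring

theorem frobInner_self_sum_smul_vecMulVec {ι : Type*} [DecidableEq ι] {m n : ℕ} (s : Finset ι)
    (σ : ι → ℝ) (u : ι → Fin m → ℝ) (v : ι → Fin n → ℝ)
    (hu : ∀ k l, ∑ i, u k i * u l i = if k = l then (1 : ℝ) else 0)
    (hv : ∀ k l, ∑ j, v k j * v l j = if k = l then (1 : ℝ) else 0) :
    frobInner (∑ k ∈ s, σ k • vecMulVec (u k) (v k)) (∑ k ∈ s, σ k • vecMulVec (u k) (v k)) =
      ∑ k ∈ s, σ k ^ 2 := by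
  simp_rw [frobInner_self_eq_sum_norm_sq, toLp_transpose_sum_smul_vecMulVec,
    sum_norm_sq_sum_smul s v hv, norm_smul, (orthonormal_toLp_of_sum_mul_eq_ite u hu).1,
    mul_one, Real.norm_eq_abs, sq_abs]

theorem sum_norm_sq_starProjection_le_finrank {ι E : Type*} [Fintype ι] [NormedAddCommGroup E]
    [InnerProductSpace ℝ E] {e : ι → E} (he : Orthonormal ℝ e) (K : Submodule ℝ E)
    [FiniteDimensional ℝ K] :
    ∑ k, ‖K.starProjection (e k)‖ ^ 2 ≤ Module.finrank ℝ K := by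
  let q := stdOrthonormalBasis ℝ K
  have hproj : ∀ x, ‖K.starProjection x‖ ^ 2 = ∑ i, ⟪(q i : E), x⟫ ^ 2 := fun x => by
    rw [Submodule.starProjection_apply, ← Submodule.coe_norm, ← q.sum_sq_inner_right]
    simp_rw [Submodule.inner_orthogonalProjectionOnto_eq_of_mem_left]
  calc ∑ k, ‖K.starProjection (e k)‖ ^ 2
      = ∑ i, ∑ k, ‖⟪e k, (q i : E)⟫‖ ^ 2 := by
        simp_rw [hproj, Real.norm_eq_abs, sq_abs, real_inner_comm (q _ : E)]
        exact Finset.sum_comm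
    _ ≤ ∑ i, ‖(q i : E)‖ ^ 2 := Finset.sum_le_sum fun i _ => he.sum_inner_products_le _
    _ = Module.finrank ℝ K := by
        simp [← Submodule.coe_norm, q.orthonormal.1]

theorem norm_sq_sub_norm_sq_starProjection_le {E : Type*} [NormedAddCommGroup E]
    [InnerProductSpace ℝ E] (K : Submodule ℝ E) [K.HasOrthogonalProjection] (w : E)
    {b : E} (hb : b ∈ K) :
    ‖w‖ ^ 2 - ‖K.starProjection w‖ ^ 2 ≤ ‖w - b‖ ^ 2 := by
  have hmin : ‖w - K.starProjection w‖ ≤ ‖w - b‖ := by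
    rw [Submodule.starProjection_minimal]
    exact ciInf_le ⟨0, Set.forall_mem_range.mpr fun _ => norm_nonneg _⟩ (⟨b, hb⟩ : K)
  rw [K.norm_sq_eq_add_norm_sq_starProjection w, Submodule.starProjection_orthogonal_val]
  nlinarith [norm_nonneg (w - K.starProjection w)]

theorem sum_mul_le_sum_of_threshold {ι : Type*} [Fintype ι] [DecidableEq ι] (S : Finset ι)
    {a c : ι → ℝ} {t : ℝ} (ht : 0 ≤ t) (haS : ∀ k ∈ S, t ≤ a k) (haSc : ∀ k ∉ S, a k ≤ t)
    (hc0 : ∀ k, 0 ≤ c k) (hc1 : ∀ k, c k ≤ 1) (hcS : ∑ k, c k ≤ S.card) :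
    ∑ k, a k * c k ≤ ∑ k ∈ S, a k := by
  have hpt : ∀ k,
      a k * c k ≤ (if k ∈ S then a k else 0) + t * (c k - if k ∈ S then 1 else 0) := by
    intro k
    split_ifs with hk
    · nlinarith [haS k hk, hc1 k]
    · nlinarith [haSc k hk, hc0 k]
  calc ∑ k, a k * c k
      ≤ ∑ k, ((if k ∈ S then a k else 0) + t * (c k - if k ∈ S then 1 else 0)) :=
        Finset.sum_le_sum fun k _ => hpt k
    _ = ∑ k ∈ S, a k + t * (∑ k, c k - S.card) := by
        rw [Finset.sum_add_distrib, ← Finset.mul_sum, Finset.sum_sub_distrib, Finset.sum_ite_mem,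
          Finset.sum_ite_mem]
        simp
    _ ≤ ∑ k ∈ S, a k := by nlinarith

theorem frobInner_self_sub_sum_norm_sq_starProjection_le {m n : ℕ}
    (W B : Matrix (Fin m) (Fin n) ℝ)
    (K : Submodule ℝ (EuclideanSpace ℝ (Fin m))) [K.HasOrthogonalProjection]
    (hB : ∀ j, WithLp.toLp 2 (Bᵀ j) ∈ K) :
    frobInner W W - ∑ j, ‖K.starProjection (WithLp.toLp 2 (Wᵀ j))‖ ^ 2 ≤
      frobInner (W - B) (W - B) := by
  simp_rw [frobInner_self_eq_sum_norm_sq, ← Finset.sum_sub_distrib]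
  refine Finset.sum_le_sum fun j _ => ?_
  have hcol : WithLp.toLp 2 ((W - B)ᵀ j) = WithLp.toLp 2 (Wᵀ j) - WithLp.toLp 2 (Bᵀ j) := rfl
  rw [hcol]
  exact norm_sq_sub_norm_sq_starProjection_le K _ (hB j)

theorem finrank_span_toLp_cols {m n : ℕ} (B : Matrix (Fin m) (Fin n) ℝ) :
    Module.finrank ℝ (Submodule.span ℝ (Set.range fun j => WithLp.toLp 2 (Bᵀ j))) = B.rank := by
  have hcols : (Set.range fun j => WithLp.toLp 2 (Bᵀ j)) =
      (WithLp.linearEquiv 2 ℝ (Fin m → ℝ)).symm '' Set.range B.col := by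
    rw [← Set.range_comp]; rfl
  rw [rank_eq_finrank_span_cols, hcols, Submodule.span_image_linearEquiv,
    LinearEquiv.finrank_map_eq]

theorem sum_norm_sq_starProjection_cols_le {p m n : ℕ} (σ : Fin p → ℝ)
    (u : Fin p → Fin m → ℝ) (v : Fin p → Fin n → ℝ)
    (hσ_nonneg : ∀ k, 0 ≤ σ k) (hσ_anti : ∀ k l : Fin p, k ≤ l → σ l ≤ σ k)
    (hu : ∀ k l, ∑ i, u k i * u l i = if k = l then (1 : ℝ) else 0)
    (hv : ∀ k l, ∑ j, v k j * v l j = if k = l then (1 : ℝ) else 0)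
    (K : Submodule ℝ (EuclideanSpace ℝ (Fin m))) [FiniteDimensional ℝ K]
    {r : ℕ} (hr1 : 1 ≤ r) (hrp : r ≤ p) (hK : Module.finrank ℝ K ≤ r) :
    ∑ j, ‖K.starProjection (WithLp.toLp 2 ((∑ k, σ k • vecMulVec (u k) (v k))ᵀ j))‖ ^ 2 ≤
      ∑ k ∈ univ.filter (fun k : Fin p => (k : ℕ) < r), σ k ^ 2 := by
  have hu' := orthonormal_toLp_of_sum_mul_eq_ite u hu
  simp_rw [toLp_transpose_sum_smul_vecMulVec, map_sum, map_smul, sum_norm_sq_sum_smul _ v hv,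
    norm_smul, mul_pow, Real.norm_eq_abs, sq_abs]
  have hsq_anti : ∀ k l : Fin p, k ≤ l → σ l ^ 2 ≤ σ k ^ 2 := fun k l hkl =>
    pow_le_pow_left₀ (hσ_nonneg l) (hσ_anti k l hkl) 2
  let i₀ : Fin p := ⟨r - 1, by omega⟩
  refine sum_mul_le_sum_of_threshold _ (t := σ i₀ ^ 2) (sq_nonneg _) (fun k hk => ?_)
    (fun k hk => ?_) (fun _ => sq_nonneg _) (fun k => ?_) ?_
  · rw [Finset.mem_filter_univ] at hk
    exact hsq_anti _ _ (Fin.le_def.mpr (by simp only [i₀]; omega))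
  · rw [Finset.mem_filter_univ] at hk
    exact hsq_anti _ _ (Fin.le_def.mpr (by simp only [i₀]; omega))
  · calc ‖K.starProjection (WithLp.toLp 2 (u k))‖ ^ 2 ≤ ‖WithLp.toLp 2 (u k)‖ ^ 2 := by
          gcongr; exact K.norm_starProjection_apply_le _
      _ = 1 := by rw [hu'.1 k, one_pow]
  · rw [Fin.card_filter_val_lt, min_eq_right hrp]
    exact (sum_norm_sq_starProjection_le_finrank hu' K).trans (by exact_mod_cast hK)

/-- (Eckart–Young–Mirsky theorem in Frobenius norm.) Let W = Σ_{k<p} σ_k u_k v_kᵀ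
be a singular value decomposition (p = min(m,n), σ decreasing and nonnegative,
(u_k), (v_k) orthonormal), and let W_r = Σ_{k<r} σ_k u_k v_kᵀ be the rank-r
truncation for 1 ≤ r ≤ p. Then ‖W − W_r‖_F = sqrt(Σ_{k≥r} σ_k²), and
‖W − W_r‖_F ≤ ‖W − B‖_F for every B of rank at most r. -/
theorem eckart_young_mirsky_frobenius {m n : ℕ}
    (σ : Fin (min m n) → ℝ)
    (u : Fin (min m n) → Fin m → ℝ) (v : Fin (min m n) → Fin n → ℝ)
    (hσ_nonneg : ∀ k, 0 ≤ σ k)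
    (hσ_anti : ∀ k l : Fin (min m n), k ≤ l → σ l ≤ σ k)
    (hu : ∀ k l : Fin (min m n), ∑ i, u k i * u l i = if k = l then (1 : ℝ) else 0)
    (hv : ∀ k l : Fin (min m n), ∑ j, v k j * v l j = if k = l then (1 : ℝ) else 0)
    (W : Matrix (Fin m) (Fin n) ℝ)
    (hW : W = ∑ k, σ k • vecMulVec (u k) (v k))
    (r : ℕ) (hr1 : 1 ≤ r) (hrp : r ≤ min m n) :
    frobNorm (W - ∑ k ∈ Finset.univ.filter (fun k : Fin (min m n) => (k : ℕ) < r),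
        σ k • vecMulVec (u k) (v k)) =
      Real.sqrt (∑ k ∈ Finset.univ.filter (fun k : Fin (min m n) => r ≤ (k : ℕ)),
        (σ k) ^ 2) ∧
    ∀ B : Matrix (Fin m) (Fin n) ℝ, B.rank ≤ r →
      frobNorm (W - ∑ k ∈ Finset.univ.filter (fun k : Fin (min m n) => (k : ℕ) < r),
          σ k • vecMulVec (u k) (v k)) ≤
        frobNorm (W - B) := by
  set Wr := ∑ k ∈ univ.filter (fun k : Fin (min m n) => (k : ℕ) < r),
    σ k • vecMulVec (u k) (v k)
  have hnorm : frobNorm (W - Wr) =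
      Real.sqrt (∑ k ∈ univ.filter (fun k : Fin (min m n) => r ≤ (k : ℕ)), σ k ^ 2) := by
    rw [frobNorm, hW, ← sum_filter_lt_add_sum_filter_le _ r, add_sub_cancel_left,
      frobInner_self_sum_smul_vecMulVec _ σ u v hu hv]
  refine ⟨hnorm, fun B hB => ?_⟩
  let K := Submodule.span ℝ (Set.range fun j => WithLp.toLp 2 (Bᵀ j))
  have hK : Module.finrank ℝ K ≤ r := (finrank_span_toLp_cols B).trans_le hB
  have hproj := frobInner_self_sub_sum_norm_sq_starProjection_le W B K
    fun j => Submodule.subset_span ⟨j, rfl⟩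
  have hkept := sum_norm_sq_starProjection_cols_le σ u v hσ_nonneg hσ_anti hu hv K hr1 hrp hK
  have hfull := frobInner_self_sum_smul_vecMulVec univ σ u v hu hv
  rw [← hW] at hkept hfull
  rw [hnorm, frobNorm]
  refine Real.sqrt_le_sqrt ?_
  linarith [sum_filter_lt_add_sum_filter_le (fun k => σ k ^ 2) r]
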